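/- Let D ∈ E^k with embedding dimension d ≤ k-2, let i < j, and suppose there exists δ > 0 such that for all ε ∈ (-δ, δ), the matrix D + ε E_{ij} is an EDM of embedding dimension exactly d. Then range(K†(E_{ij})) ⊆ range(K†(D)); equivalently, the two eigenvectors e_i - e_j and (2/k)e - (e_i + e_j) of K†(E_{ij}) lie in the range of the centered Gram matrix G = K†(D). Consequently, any centered configuration matrix P of D (with PPᵀ = G) has all of its rows except rows i and j lying in a common affine translate of a linear subspace of dimension d - 2. -/

import Mathlib

open Matrix BigOperators

noncomputable section

def unitMat {n : ℕ} (i j : Fin n) : Matrix (Fin n) (Fin n) ℝ :=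
  Matrix.single i j 1 + Matrix.single j i 1

def Jmat (ι : Type*) [Fintype ι] [DecidableEq ι] : Matrix ι ι ℝ :=
  (1 : Matrix ι ι ℝ) - (Fintype.card ι : ℝ)⁻¹ • Matrix.of (fun _ _ => (1 : ℝ))

def cKdag {ι : Type*} [Fintype ι] [DecidableEq ι] (D : Matrix ι ι ℝ) : Matrix ι ι ℝ :=
  (-(1 / 2 : ℝ)) • (Jmat ι * D * Jmat ι)

def IsEDMmat {ι : Type*} [Fintype ι] [DecidableEq ι] (D : Matrix ι ι ℝ) : Prop :=
  D.IsSymm ∧ (∀ i, D i i = 0) ∧ (cKdag D).PosSemidef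

/-!
For `|ε| < δ` the matrices `K†(D) + ε K†(E_{ij})` are positive semidefinite; testing them at `±ε`
on a kernel vector `x` of `K†(D)` forces `xᵀ K†(E_{ij}) x = 0` and then `K†(E_{ij}) x = 0`. So
`ker K†(D) ⊆ ker K†(E_{ij})`, and for symmetric matrices this is the reverse inclusion of ranges.
The two eigenvectors `u = e_i - e_j` and `w = (2/k)e - (e_i + e_j)` of `K†(E_{ij})` therefore lie
in the range of `P Pᵀ`, hence in the column space of `P`: `u = P a`, `w = P b`. Row `s ∉ {i, j}`
of `P` then satisfies `⟪P s, a⟫ = 0` and `⟪P s, b⟫ = 2/k`, and when `k ≥ 3` the vectors `u, w`,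
hence `a, b`, are independent, so these two equations cut out a translate of a subspace of
dimension `d - 2`.
-/

theorem LinearMap.IsSymmetric.range_le_range_of_ker_le {𝕜 E : Type*} [RCLike 𝕜]
    [NormedAddCommGroup E] [InnerProductSpace 𝕜 E] [FiniteDimensional 𝕜 E]
    {S T : E →ₗ[𝕜] E} (hS : S.IsSymmetric) (hT : T.IsSymmetric)
    (h : LinearMap.ker T ≤ LinearMap.ker S) : LinearMap.range S ≤ LinearMap.range T := by
  rw [← (LinearMap.range S).orthogonal_orthogonal, ← (LinearMap.range T).orthogonal_orthogonal,
    hS.orthogonal_range, hT.orthogonal_range]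
  exact Submodule.orthogonal_le h

namespace Matrix

theorem IsHermitian.range_mulVecLin_le_of_ker_le {𝕜 n : Type*} [RCLike 𝕜] [Fintype n]
    [DecidableEq n] {A B : Matrix n n 𝕜} (hA : A.IsHermitian) (hB : B.IsHermitian)
    (h : LinearMap.ker A.mulVecLin ≤ LinearMap.ker B.mulVecLin) :
    LinearMap.range B.mulVecLin ≤ LinearMap.range A.mulVecLin := by
  have key := (isSymmetric_toEuclideanLin_iff.mpr hB).range_le_range_of_ker_le
    (isSymmetric_toEuclideanLin_iff.mpr hA) fun x hx => by
      simpa [toLpLin_apply] using h (x := WithLp.ofLp x) (by simpa [toLpLin_apply] using hx)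
  rintro _ ⟨y, rfl⟩
  obtain ⟨z, hz⟩ := key ⟨WithLp.toLp 2 y, rfl⟩
  exact ⟨WithLp.ofLp z, by simpa [toLpLin_apply] using congrArg WithLp.ofLp hz⟩

theorem ker_mulVecLin_le_of_posSemidef_add_smul_of_sub_smul {ι : Type*} [Fintype ι]
    {A B : Matrix ι ι ℝ} {ε : ℝ} (hε : ε ≠ 0) (hpos : (A + ε • B).PosSemidef)
    (hneg : (A - ε • B).PosSemidef) :
    LinearMap.ker A.mulVecLin ≤ LinearMap.ker B.mulVecLin := by
  intro x hx
  rw [LinearMap.mem_ker, mulVecLin_apply] at hx ⊢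
  have hpos_x : (A + ε • B) *ᵥ x = ε • (B *ᵥ x) := by
    rw [add_mulVec, hx, smul_mulVec, zero_add]
  have hneg_x : (A - ε • B) *ᵥ x = -(ε • (B *ᵥ x)) := by
    rw [sub_mulVec, hx, smul_mulVec, zero_sub]
  have h1 := hpos.dotProduct_mulVec_nonneg x
  have h2 := hneg.dotProduct_mulVec_nonneg x
  rw [hpos_x] at h1
  rw [hneg_x] at h2
  simp only [star_trivial, dotProduct_neg, dotProduct_smul, smul_eq_mul] at h1 h2
  have hzero : star x ⬝ᵥ (A + ε • B) *ᵥ x = 0 := by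
    rw [hpos_x, star_trivial, dotProduct_smul, smul_eq_mul]
    linarith
  rw [hpos.dotProduct_mulVec_zero_iff, hpos_x] at hzero
  exact (smul_eq_zero.mp hzero).resolve_left hε

theorem range_mulVecLin_le_of_forall_posSemidef_add_smul {ι : Type*} [Fintype ι] [DecidableEq ι]
    {A B : Matrix ι ι ℝ} (hB : B.IsHermitian) {δ : ℝ} (hδ : 0 < δ)
    (h : ∀ ε : ℝ, |ε| < δ → (A + ε • B).PosSemidef) :
    LinearMap.range B.mulVecLin ≤ LinearMap.range A.mulVecLin := by
  have hA : A.IsHermitian := by simpa using (h 0 (by simpa using hδ)).isHermitian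
  have hhalf : |δ / 2| < δ := by rw [abs_of_pos (half_pos hδ)]; exact half_lt_self hδ
  refine hA.range_mulVecLin_le_of_ker_le hB
    (ker_mulVecLin_le_of_posSemidef_add_smul_of_sub_smul (half_pos hδ).ne' (h _ hhalf) ?_)
  simpa [sub_eq_add_neg] using h (-(δ / 2)) (by rwa [abs_neg])

theorem mem_range_mulVecLin_of_mulVec_eq_smul {K n : Type*} [Field K] [Fintype n]
    {A : Matrix n n K} {x : n → K} {c : K} (hx : A *ᵥ x = c • x) (hc : c ≠ 0) :
    x ∈ LinearMap.range A.mulVecLin :=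
  ⟨c⁻¹ • x, by rw [mulVecLin_apply, mulVec_smul, hx, smul_smul, inv_mul_cancel₀ hc, one_smul]⟩

theorem exists_submodule_sub_mem_of_mulVec_eq {K m n : Type*} [Field K] [Fintype m]
    [Fintype n] (M : Matrix m n K) (hM : LinearIndependent K M.row) (y : m → K) :
    ∃ (L : Submodule K (n → K)) (v : n → K),
      Module.finrank K L = Fintype.card n - Fintype.card m ∧ ∀ x, M *ᵥ x = y → x - v ∈ L := by
  have hrange : LinearMap.range M.mulVecLin = ⊤ := by
    apply Submodule.eq_top_of_finrank_eq
    rw [← rank, hM.rank_matrix, Module.finrank_fintype_fun_eq_card]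
  obtain ⟨v, hv⟩ := LinearMap.range_eq_top.mp hrange y
  refine ⟨LinearMap.ker M.mulVecLin, v, ?_, fun x hx => ?_⟩
  · have := LinearMap.finrank_range_add_finrank_ker M.mulVecLin
    rw [← rank, hM.rank_matrix, Module.finrank_fintype_fun_eq_card] at this
    omega
  · simp [LinearMap.mem_ker, mulVec_sub, hx, ← hv]

theorem exists_submodule_row_sub_mem {K ι m n : Type*} [Field K] [Fintype m] [Fintype n]
    (P : Matrix ι n K) {y : m → ι → K} (hy : LinearIndependent K y)
    (hyP : ∀ c, y c ∈ LinearMap.range P.mulVecLin) (t : m → K) :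
    ∃ (L : Submodule K (n → K)) (v : n → K),
      Module.finrank K L = Fintype.card n - Fintype.card m ∧
        ∀ s, (∀ c, y c s = t c) → P s - v ∈ L := by
  choose a ha using hyP
  have hM : LinearIndependent K (of a).row :=
    LinearIndependent.of_comp P.mulVecLin (by convert hy; exact funext ha)
  obtain ⟨L, v, hL, hmem⟩ := exists_submodule_sub_mem_of_mulVec_eq (of a) hM t
  refine ⟨L, v, hL, fun s hs => hmem _ (funext fun c => ?_)⟩
  rw [← hs, ← ha c, mulVecLin_apply, mulVec, mulVec, dotProduct_comm]
  rfl

end Matrix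

theorem Jmat_transpose (ι : Type*) [Fintype ι] [DecidableEq ι] : (Jmat ι)ᵀ = Jmat ι := by
  rw [Jmat, transpose_sub, transpose_one, transpose_smul]
  rfl

theorem unitMat_isSymm {k : ℕ} (i j : Fin k) : (unitMat i j).IsSymm := by
  simp [IsSymm, unitMat, transpose_add, add_comm]

theorem cKdag_isHermitian {ι : Type*} [Fintype ι] [DecidableEq ι] {M : Matrix ι ι ℝ}
    (hM : M.IsSymm) : (cKdag M).IsHermitian := by
  rw [IsHermitian, conjTranspose_eq_transpose_of_trivial, cKdag, transpose_smul, transpose_mul,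
    transpose_mul, Jmat_transpose, hM, Matrix.mul_assoc]

theorem Jmat_mulVec {ι : Type*} [Fintype ι] [DecidableEq ι] (x : ι → ℝ) :
    Jmat ι *ᵥ x = x - ((∑ t, x t) / Fintype.card ι) • 1 := by
  rw [Jmat, sub_mulVec, one_mulVec, smul_mulVec]
  ext s
  simp [mulVec, dotProduct, div_eq_inv_mul]

theorem Jmat_mulVec_of_sum_eq_zero {ι : Type*} [Fintype ι] [DecidableEq ι] {x : ι → ℝ}
    (hx : ∑ t, x t = 0) : Jmat ι *ᵥ x = x := by
  simp [Jmat_mulVec, hx]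

theorem cKdag_mulVec {ι : Type*} [Fintype ι] [DecidableEq ι] (M : Matrix ι ι ℝ) (x : ι → ℝ) :
    cKdag M *ᵥ x = (-(1 / 2 : ℝ)) • (Jmat ι *ᵥ (M *ᵥ (Jmat ι *ᵥ x))) := by
  rw [cKdag, smul_mulVec, mulVec_mulVec, mulVec_mulVec]

theorem cKdag_add_smul {ι : Type*} [Fintype ι] [DecidableEq ι] (D E : Matrix ι ι ℝ) (ε : ℝ) :
    cKdag (D + ε • E) = cKdag D + ε • cKdag E := by
  simp only [cKdag, Matrix.mul_add, Matrix.add_mul, Matrix.mul_smul, Matrix.smul_mul, smul_add,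
    smul_comm ε]

theorem unitMat_mulVec {k : ℕ} (i j : Fin k) (x : Fin k → ℝ) :
    unitMat i j *ᵥ x = Pi.single i (x j) + Pi.single j (x i) := by
  ext s
  simp [unitMat, add_mulVec, single_mulVec_eq, Pi.single_apply]

theorem cKdag_unitMat_mulVec_sub_single {k : ℕ} {i j : Fin k} (hij : i ≠ j) :
    cKdag (unitMat i j) *ᵥ (Pi.single i 1 - Pi.single j 1) =
      (1 / 2 : ℝ) • (Pi.single i 1 - Pi.single j 1) := by
  have hsum : ∑ t, (Pi.single i 1 - Pi.single j 1 : Fin k → ℝ) t = 0 := by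
    simp [Finset.sum_sub_distrib]
  have hswap : unitMat i j *ᵥ (Pi.single i 1 - Pi.single j 1) =
      -(Pi.single i 1 - Pi.single j 1) := by
    simp [unitMat_mulVec, hij, hij.symm, Pi.single_neg, neg_add_eq_sub]
  rw [cKdag_mulVec, Jmat_mulVec_of_sum_eq_zero hsum, hswap, mulVec_neg,
    Jmat_mulVec_of_sum_eq_zero hsum, smul_neg, ← neg_smul]
  norm_num

theorem cKdag_unitMat_mulVec_centered {k : ℕ} {i j : Fin k} (hij : i ≠ j) :
    cKdag (unitMat i j) *ᵥ ((2 / k : ℝ) • 1 - (Pi.single i 1 + Pi.single j 1)) =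
      ((2 - k) / (2 * k) : ℝ) • ((2 / k : ℝ) • 1 - (Pi.single i 1 + Pi.single j 1)) := by
  have hk : (k : ℝ) ≠ 0 := by exact_mod_cast (Fin.pos i).ne'
  set w : Fin k → ℝ := (2 / k : ℝ) • 1 - (Pi.single i 1 + Pi.single j 1)
  have hsum : ∑ t, w t = 0 := by
    simp [w, Finset.sum_sub_distrib, Finset.sum_add_distrib, mul_div_cancel₀ _ hk,
      one_add_one_eq_two]
  have hswap : unitMat i j *ᵥ w = (2 / k - 1 : ℝ) • (Pi.single i 1 + Pi.single j 1) := by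
    simp [w, unitMat_mulVec, hij, hij.symm, smul_add, ← Pi.single_smul']
  have hcenter : Jmat (Fin k) *ᵥ (Pi.single i 1 + Pi.single j 1) = -w := by
    simp [w, Jmat_mulVec, Finset.sum_add_distrib, one_add_one_eq_two]
  rw [cKdag_mulVec, Jmat_mulVec_of_sum_eq_zero hsum, hswap, mulVec_smul, hcenter, smul_neg,
    neg_smul_neg, smul_smul]
  congr 1
  field_simp

theorem linearIndependent_sub_single_centered {k : ℕ} (hk : 2 < k) {i j : Fin k} (hij : i ≠ j) :
    LinearIndependent ℝ ![(Pi.single i 1 - Pi.single j 1 : Fin k → ℝ),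
      (2 / k : ℝ) • 1 - (Pi.single i 1 + Pi.single j 1)] := by
  obtain ⟨r, hri, hrj⟩ := Fin.exists_ne_and_ne_of_two_lt i j hk
  have hk0 : (k : ℝ) ≠ 0 := by positivity
  refine LinearIndependent.pair_iff.mpr fun a b hab => ?_
  have hb : b = 0 := by simpa [Pi.single_apply, hri, hrj, hk0] using congrFun hab r
  subst hb
  simpa [hij] using congrFun hab i

theorem restricted_yielding_necessary_general (k d : ℕ) (hkd : d + 2 ≤ k)
    (D : Matrix (Fin k) (Fin k) ℝ)
    (i j : Fin k) (hij : i < j)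
    (hyield : ∃ δ > (0 : ℝ), ∀ ε : ℝ, |ε| < δ →
      IsEDMmat (D + ε • unitMat i j) ∧ (cKdag (D + ε • unitMat i j)).rank = d) :
    (∀ x : Fin k → ℝ, (∃ y, cKdag (unitMat i j) *ᵥ y = x) →
      ∃ y, cKdag D *ᵥ y = x) ∧
    (∀ P : Matrix (Fin k) (Fin d) ℝ, P * Pᵀ = cKdag D →
      ∃ (L : Submodule ℝ (Fin d → ℝ)) (v : Fin d → ℝ),
        Module.finrank ℝ L = d - 2 ∧
        ∀ s : Fin k, s ≠ i → s ≠ j → (fun t => P s t) - v ∈ L) := by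
  obtain ⟨δ, hδ, hyield⟩ := hyield
  have hrange := range_mulVecLin_le_of_forall_posSemidef_add_smul
    (cKdag_isHermitian (unitMat_isSymm i j)) hδ fun ε hε =>
      cKdag_add_smul D (unitMat i j) ε ▸ (hyield ε hε).1.2.2
  refine ⟨fun x hx => hrange hx, fun P hP => ?_⟩
  rcases (show k = 2 ∨ 2 < k by omega) with rfl | hk
  · obtain rfl : d = 0 := by omega
    exact ⟨⊤, 0, by simp, fun _ _ _ => Submodule.mem_top⟩
  have hGP : LinearMap.range (cKdag D).mulVecLin ≤ LinearMap.range P.mulVecLin := by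
    rw [← hP, mulVecLin_mul]
    exact LinearMap.range_comp_le_range _ _
  have hw : (2 - k : ℝ) / (2 * k) ≠ 0 := by
    have : (2 : ℝ) < k := by exact_mod_cast hk
    exact div_ne_zero (by linarith) (by positivity)
  obtain ⟨L, v, hL, hmem⟩ := P.exists_submodule_row_sub_mem
    (linearIndependent_sub_single_centered hk hij.ne) (t := ![0, 2 / k]) fun c => by
      fin_cases c
      · exact hGP (hrange (mem_range_mulVecLin_of_mulVec_eq_smul
          (cKdag_unitMat_mulVec_sub_single hij.ne) one_half_pos.ne'))
      · exact hGP (hrange (mem_range_mulVecLin_of_mulVec_eq_smul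
          (cKdag_unitMat_mulVec_centered hij.ne) hw))
  refine ⟨L, v, by simpa using hL, fun s hsi hsj => hmem s fun c => ?_⟩
  fin_cases c <;> simp [hsi, hsj]

/-- Necessary condition for restricted yielding: if `D + ε E_{ij}` remains an
EDM of embedding dimension exactly `d` for all small `ε`, then
`range K†(E_{ij}) ⊆ range K†(D)`, and for any centered configuration matrix
`P` with `PPᵀ = K†(D)`, all rows other than rows `i` and `j` lie in a common
affine translate of a linear subspace of dimension `d - 2`. -/
theorem restricted_yielding_necessary (k d : ℕ) (hkd : d + 2 ≤ k)
    (D : Matrix (Fin k) (Fin k) ℝ) (hD : IsEDMmat D)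
    (hrank : (cKdag D).rank = d)
    (i j : Fin k) (hij : i < j)
    (hyield : ∃ δ > (0 : ℝ), ∀ ε : ℝ, |ε| < δ →
      IsEDMmat (D + ε • unitMat i j) ∧ (cKdag (D + ε • unitMat i j)).rank = d) :
    (∀ x : Fin k → ℝ, (∃ y, cKdag (unitMat i j) *ᵥ y = x) →
      ∃ y, cKdag D *ᵥ y = x) ∧
    (∀ P : Matrix (Fin k) (Fin d) ℝ, P * Pᵀ = cKdag D →
      ∃ (L : Submodule ℝ (Fin d → ℝ)) (v : Fin d → ℝ),
        Module.finrank ℝ L = d - 2 ∧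
        ∀ s : Fin k, s ≠ i → s ≠ j → (fun t => P s t) - v ∈ L) :=
  restricted_yielding_necessary_general k d hkd D i j hij hyield
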